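/- arXiv:1409.8116 — 2 statements merged into one kernel-verified Lean document; each statement's English description precedes it below -/
import Mathlib

section
/- Let n ≥ 1 and define the discrete cosine transforms DCT-II and DCT-III on ℝ^n by (C₂ f)_k = 2 · Σ_{j=0}^{n−1} f_j · cos(π (j + 1/2) k / n) and (C₃ g)_k = g_0 + 2 · Σ_{j=1}^{n−1} g_j · cos(π j (k + 1/2) / n), for k = 0,…,n−1. Then for every f ∈ ℝ^n, C₃(C₂ f) = 2n · f; that is, DCT-III inverts DCT-II up to the normalization factor 2n. -/
/-!
Expanding `C₃ (C₂ f)` and exchanging the two sums reduces the claim to the orthogonality relation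
`∑_{j<n} 2 cos(π(m+½)j/n) cos(πj(k+½)/n) = 1 + n δ_{mk}` for `m, k < n`. By the product-to-sum
formula the left side is `D(m-k) + D(m+k+1)` with `D(r) = ∑_{j<n} cos(jπr/n)`, and Lagrange's
identity `2 sin(x/2) ∑_{j<n} cos(jx) = sin((n-½)x) + sin(x/2)` gives `D(r) = (1 - (-1)^r)/2`
whenever `0 < |r| < 2n`. Since `m - k` and `m + k + 1` have opposite parity, the two values add
up to `1` when `m ≠ k`, while `D(0) = n`.
-/

open Real Finset

theorem two_mul_sin_half_mul_sum_range_cos (n : ℕ) (x : ℝ) :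
    2 * sin (x / 2) * ∑ j ∈ range n, cos (j * x) = sin ((n - 1 / 2) * x) + sin (x / 2) := by
  induction n with
  | zero => simp [div_eq_inv_mul]
  | succ n ih =>
    rw [sum_range_succ, mul_add, ih, two_mul_sin_mul_cos,
      show x / 2 - n * x = -((n - 1 / 2) * x) by ring, sin_neg]
    push_cast
    ring_nf

theorem sin_pi_mul_int_div_div_two_ne_zero {n : ℕ} {r : ℤ} (h0 : r ≠ 0) (hlt : |r| < 2 * n) :
    sin (π * r / n / 2) ≠ 0 := by
  have hn : (0 : ℝ) < n := by
    have : (0 : ℤ) < n := by linarith [abs_pos.mpr h0]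
    exact_mod_cast this
  obtain ⟨hlo, hhi⟩ := abs_lt.mp (show |(r : ℝ)| < 2 * n by exact_mod_cast hlt)
  rw [Ne, sin_eq_zero_iff_of_lt_of_lt]
  · simp [hn.ne', pi_ne_zero, h0]
  · rw [div_div, lt_div_iff₀ (by positivity)]
    nlinarith [mul_lt_mul_of_pos_left hlo pi_pos]
  · rw [div_div, div_lt_iff₀ (by positivity)]
    nlinarith [mul_lt_mul_of_pos_left hhi pi_pos]

theorem sum_range_cos_mul_pi_mul_int_div {n : ℕ} {r : ℤ} (h0 : r ≠ 0) (hlt : |r| < 2 * n) :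
    ∑ j ∈ range n, cos (j * (π * r / n)) = (1 - (-1) ^ r) / 2 := by
  have hsin := sin_pi_mul_int_div_div_two_ne_zero h0 hlt
  have hn : (n : ℝ) ≠ 0 := by rintro h; simp_all
  have hlag := two_mul_sin_half_mul_sum_range_cos n (π * r / n)
  rw [show (n - 1 / 2) * (π * r / n) = r * π - π * r / n / 2 by field_simp,
    sin_int_mul_pi_sub] at hlag
  apply mul_left_cancel₀ (mul_ne_zero two_ne_zero hsin)
  linear_combination hlag

theorem sum_range_two_mul_cos_mul_cos {n m k : ℕ} (hm : m < n) (hk : k < n) :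
    ∑ j ∈ range n, 2 * cos (π * (m + 1 / 2) * j / n) * cos (π * j * (k + 1 / 2) / n)
      = 1 + if m = k then (n : ℝ) else 0 := by
  have hprod : ∀ j ∈ range n,
      2 * cos (π * (m + 1 / 2) * j / n) * cos (π * j * (k + 1 / 2) / n)
        = cos (j * (π * ((m - k : ℤ) : ℝ) / n)) + cos (j * (π * ((m + k + 1 : ℤ) : ℝ) / n)) := by
    intro j _
    rw [two_mul_cos_mul_cos]
    push_cast
    ring_nf
  have hsum : ∑ j ∈ range n, cos (j * (π * ((m + k + 1 : ℤ) : ℝ) / n))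
      = (1 + (-1) ^ ((m : ℤ) - k)) / 2 := by
    rw [sum_range_cos_mul_pi_mul_int_div (by omega) (by rw [abs_lt]; omega),
      show (m + k + 1 : ℤ) = (m - k) + (2 * k + 1) by ring, zpow_add₀ (by norm_num),
      (odd_two_mul_add_one (k : ℤ)).neg_one_zpow]
    ring
  rw [sum_congr rfl hprod, sum_add_distrib, hsum]
  split_ifs with hmk
  · subst hmk
    simp only [sub_self, Int.cast_zero, mul_zero, zero_div, cos_zero, sum_const, card_range,
      nsmul_eq_mul, mul_one, zpow_zero, add_self_div_two]
    ring
  · rw [sum_range_cos_mul_pi_mul_int_div (by omega) (by rw [abs_lt]; omega)]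
    ring

theorem dct_III_inverts_dct_II_general
    (n : ℕ)
    (C₂ C₃ : (ℕ → ℝ) → (ℕ → ℝ))
    (hC₂ : ∀ f k, C₂ f k = 2 * ∑ j ∈ Finset.range n, f j * Real.cos (π * (j + 1/2) * k / n))
    (hC₃ : ∀ g k, C₃ g k = g 0
        + 2 * ∑ j ∈ Finset.Ico 1 n, g j * Real.cos (π * j * (k + 1/2) / n))
    (f : ℕ → ℝ) :
    ∀ k < n, C₃ (C₂ f) k = 2 * n * f k := by
  intro k hk
  have hC₂_zero : C₂ f 0 = 2 * ∑ m ∈ range n, f m := by simp [hC₂]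
  calc C₃ (C₂ f) k
      = 2 * ∑ j ∈ range n, C₂ f j * cos (π * j * (k + 1 / 2) / n) - C₂ f 0 := by
        rw [hC₃, sum_range_eq_add_Ico _ (by omega : 0 < n)]
        simp only [Nat.cast_zero, mul_zero, zero_mul, zero_div, cos_zero, mul_one]
        ring
    _ = 2 * ∑ m ∈ range n, f m *
          ∑ j ∈ range n, 2 * cos (π * (m + 1 / 2) * j / n) * cos (π * j * (k + 1 / 2) / n)
          - 2 * ∑ m ∈ range n, f m := by
        rw [hC₂_zero]
        congr 2
        simp_rw [hC₂, mul_sum, sum_mul]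
        rw [sum_comm]
        exact sum_congr rfl fun _ _ => sum_congr rfl fun _ _ => by ring
    _ = 2 * ∑ m ∈ range n, (f m + if m = k then n * f m else 0) - 2 * ∑ m ∈ range n, f m := by
        congr 2
        refine sum_congr rfl fun m hm => ?_
        rw [sum_range_two_mul_cos_mul_cos (mem_range.mp hm) hk]
        split_ifs <;> ring
    _ = 2 * n * f k := by
        rw [sum_add_distrib, sum_ite_eq', if_pos (mem_range.mpr hk)]
        ring

/-- The type-III discrete cosine transform
`(C₃ g)_k = g_0 + 2 Σ_{j=1}^{n−1} g_j cos(π j (k+1/2)/n)`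
inverts the type-II discrete cosine transform
`(C₂ f)_k = 2 Σ_{j=0}^{n−1} f_j cos(π (j+1/2) k/n)` up to the factor `2n`. -/
theorem dct_III_inverts_dct_II
    (n : ℕ) (hn : 1 ≤ n)
    (C₂ C₃ : (ℕ → ℝ) → (ℕ → ℝ))
    (hC₂ : ∀ f k, C₂ f k = 2 * ∑ j ∈ Finset.range n, f j * Real.cos (π * (j + 1/2) * k / n))
    (hC₃ : ∀ g k, C₃ g k = g 0
        + 2 * ∑ j ∈ Finset.Ico 1 n, g j * Real.cos (π * j * (k + 1/2) / n))
    (f : ℕ → ℝ) :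
    ∀ k < n, C₃ (C₂ f) k = 2 * n * f k :=
  dct_III_inverts_dct_II_general n C₂ C₃ hC₂ hC₃ f
end

section
/- Let n ≥ 2, Δx > 0, and let g ∈ ℂ^n satisfy Σ_{j=0}^{n−1} g_j = 0. Define ĝ_k = (1/n) Σ_{j=0}^{n−1} g_j · exp(−2πi k j / n), λ_k = −(2 sin(kπ/n)/Δx)² for k = 1,…,n−1, and φ_j = Σ_{k=1}^{n−1} (ĝ_k / λ_k) · exp(2πi k j / n). Then φ solves the periodic discrete Poisson equation: (φ_{(j+1) mod n} − 2 φ_j + φ_{(j−1) mod n}) / Δx² = g_j for every j = 0,…,n−1. -/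
open Real

/-- The fast Poisson solver for periodic boundary conditions: if `Σ_j g_j = 0`,
`ĝ_k = (1/n) Σ_j g_j exp(−2πi k j/n)`, `λ_k = −(2 sin(kπ/n)/Δx)²`, and
`φ_j = Σ_{k=1}^{n−1} (ĝ_k/λ_k) exp(2πi k j/n)`, then `φ` solves the periodic discrete
Poisson equation `(φ_{(j+1) mod n} − 2φ_j + φ_{(j−1) mod n})/Δx² = g_j`. -/
theorem periodic_discrete_poisson_solver
    (n : ℕ) (hn : 2 ≤ n) (Δx : ℝ) (hΔx : 0 < Δx)
    (g : ℕ → ℂ) (hg : ∑ j ∈ Finset.range n, g j = 0)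
    (ghat : ℕ → ℂ)
    (hghat : ∀ k, ghat k = (1 / (n : ℂ)) *
        ∑ j ∈ Finset.range n, g j * Complex.exp (-(2 * (π : ℂ) * Complex.I * k * j / n)))
    (lam : ℕ → ℝ)
    (hlam : ∀ k, lam k = -(2 * Real.sin (k * π / n) / Δx) ^ 2)
    (φ : ℕ → ℂ)
    (hφ : ∀ j, φ j = ∑ k ∈ Finset.Ico 1 n,
        (ghat k / (lam k : ℂ)) * Complex.exp (2 * (π : ℂ) * Complex.I * k * j / n)) :
    ∀ j < n, (φ ((j + 1) % n) - 2 * φ j + φ ((j + n - 1) % n)) / (Δx : ℂ) ^ 2 = g j := by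
  intro j hj
  have hn0 : (n : ℂ) ≠ 0 := Nat.cast_ne_zero.mpr (by omega)
  have hΔ0 : (Δx : ℂ) ≠ 0 := Complex.ofReal_ne_zero.mpr (ne_of_gt hΔx)
  set ζ : ℂ := Complex.exp (2 * (π : ℂ) * Complex.I / n) with hζdef
  have hprim : IsPrimitiveRoot ζ n := Complex.isPrimitiveRoot_exp n (by omega)
  have hζn : ζ ^ n = 1 := hprim.pow_eq_one
  have hζ0 : ζ ≠ 0 := Complex.exp_ne_zero _
  have hpow : ∀ m : ℕ, Complex.exp (2 * (π : ℂ) * Complex.I * m / n) = ζ ^ m := by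
    intro m
    rw [hζdef, ← Complex.exp_nat_mul]
    congr 1; ring
  have hE : ∀ k m : ℕ, Complex.exp (2 * (π : ℂ) * Complex.I * k * m / n) = ζ ^ (k * m) := by
    intro k m
    rw [← hpow (k * m)]
    congr 1; push_cast; ring
  have hEneg : ∀ k m : ℕ,
      Complex.exp (-(2 * (π : ℂ) * Complex.I * k * m / n)) = (ζ ^ (k * m))⁻¹ := by
    intro k m
    rw [Complex.exp_neg, hE]
  have hmodpow : ∀ a : ℕ, ζ ^ a = ζ ^ (a % n) := by
    intro a
    conv_lhs => rw [← Nat.div_add_mod a n]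
    rw [pow_add, pow_mul, hζn, one_pow, one_mul]
  have hcongr : ∀ a b : ℕ, a % n = b % n → ζ ^ a = ζ ^ b := by
    intro a b h
    rw [hmodpow a, hmodpow b, h]
  -- λ_k nonzero on [1,n)
  have hlam0 : ∀ k ∈ Finset.Ico 1 n, (lam k : ℂ) ≠ 0 := by
    intro k hk
    rw [Finset.mem_Ico] at hk
    have hs : 0 < Real.sin (k * π / n) := by
      apply Real.sin_pos_of_pos_of_lt_pi
      · have : (0:ℝ) < k := by exact_mod_cast hk.1
        positivity
      · rw [div_lt_iff₀ (by positivity)]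
        have : (k : ℝ) < n := by exact_mod_cast hk.2
        nlinarith [Real.pi_pos]
    rw [hlam]
    simp only [ne_eq, Complex.ofReal_eq_zero]
    intro h
    have h2 : (2 * Real.sin (k * π / n) / Δx) = 0 := by
      nlinarith [sq_nonneg (2 * Real.sin (k * π / n) / Δx)]
    rcases div_eq_zero_iff.mp h2 with h' | h'
    · nlinarith
    · exact (ne_of_gt hΔx) h'
  -- per-mode Laplacian factor
  have hfac : ∀ k : ℕ, ζ ^ k - 2 + (ζ ^ k)⁻¹ = (lam k : ℂ) * (Δx : ℂ) ^ 2 := by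
    intro k
    have h1 : ζ ^ k = Complex.exp ((2 * π * k / n : ℂ) * Complex.I) := by
      rw [← hpow k]; congr 1; ring
    have h2 : (ζ ^ k)⁻¹ = Complex.exp (-(2 * π * k / n : ℂ) * Complex.I) := by
      rw [h1, ← Complex.exp_neg]; congr 1; ring
    have hcos : ζ ^ k + (ζ ^ k)⁻¹ = 2 * Complex.cos (2 * π * k / n) := by
      rw [Complex.two_cos, h1, ← Complex.exp_neg, neg_mul]
    have hdouble : Complex.cos (2 * (π : ℂ) * k / n) =
        1 - 2 * Complex.sin ((π : ℂ) * k / n) ^ 2 := by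
      have h3 : (2 * (π : ℂ) * k / n) = 2 * ((π : ℂ) * k / n) := by ring
      rw [h3, Complex.cos_two_mul]
      linear_combination 2 * Complex.sin_sq_add_cos_sq ((π : ℂ) * k / n)
    have key : ζ ^ k - 2 + (ζ ^ k)⁻¹ = -4 * Complex.sin ((π : ℂ) * k / n) ^ 2 := by
      linear_combination hcos + 2 * hdouble
    rw [key, hlam]
    push_cast
    have harg : ((k : ℂ) * π / n) = ((π : ℂ) * k / n) := by ring
    rw [harg]
    field_simp
    ring
  -- exponent arithmetic for shifted indices
  have h1 : ∀ k : ℕ, ζ ^ (k * ((j + 1) % n)) = ζ ^ (k * j) * ζ ^ k := by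
    intro k
    rw [hcongr (k * ((j + 1) % n)) (k * (j + 1))
      (Nat.ModEq.mul_left k (Nat.mod_modEq (j + 1) n))]
    rw [show k * (j + 1) = k * j + k by ring, pow_add]
  have h2 : ∀ k : ℕ, ζ ^ (k * ((j + n - 1) % n)) = ζ ^ (k * j) * (ζ ^ k)⁻¹ := by
    intro k
    rw [hcongr (k * ((j + n - 1) % n)) (k * (j + n - 1))
      (Nat.ModEq.mul_left k (Nat.mod_modEq (j + n - 1) n))]
    have hs : k * (j + n - 1) + k = k * j + n * k := by
      have h' : j + n - 1 + 1 = j + n := by omega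
      calc k * (j + n - 1) + k = k * ((j + n - 1) + 1) := by ring
        _ = k * (j + n) := by rw [h']
        _ = k * j + n * k := by ring
    have e : ζ ^ (k * (j + n - 1)) * ζ ^ k = ζ ^ (k * j) := by
      rw [← pow_add, hs, pow_add, pow_mul ζ n k, hζn, one_pow, mul_one]
    exact (eq_mul_inv_iff_mul_eq₀ (pow_ne_zero k hζ0)).mpr e
  -- per-mode identity
  have hterm : ∀ k ∈ Finset.Ico 1 n,
      (ghat k / (lam k : ℂ) * ζ ^ (k * ((j + 1) % n))
        - 2 * (ghat k / (lam k : ℂ) * ζ ^ (k * j))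
        + ghat k / (lam k : ℂ) * ζ ^ (k * ((j + n - 1) % n))) / (Δx : ℂ) ^ 2
      = ghat k * ζ ^ (k * j) := by
    intro k hk
    rw [h1 k, h2 k]
    have hl := hlam0 k hk
    have hz : (ζ : ℂ) ^ k ≠ 0 := pow_ne_zero _ hζ0
    have hstep : ghat k / (lam k : ℂ) * (ζ ^ (k * j) * ζ ^ k)
        - 2 * (ghat k / (lam k : ℂ) * ζ ^ (k * j))
        + ghat k / (lam k : ℂ) * (ζ ^ (k * j) * (ζ ^ k)⁻¹)
        = ghat k / (lam k : ℂ) * ζ ^ (k * j) * (ζ ^ k - 2 + (ζ ^ k)⁻¹) := by ring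
    rw [hstep, hfac k]
    field_simp
  -- ghat 0 = 0
  have h0 : ghat 0 = 0 := by
    rw [hghat]
    simp [hg]
  -- orthogonality
  have horth : ∀ m : ℕ, m < n →
      ∑ k ∈ Finset.range n, ζ ^ (k * j) * (ζ ^ (k * m))⁻¹
        = if m = j then (n : ℂ) else 0 := by
    intro m hm
    have hz : ∀ k : ℕ, ζ ^ (k * j) * (ζ ^ (k * m))⁻¹ = (ζ ^ j * (ζ ^ m)⁻¹) ^ k := by
      intro k
      rw [mul_pow, inv_pow, ← pow_mul, ← pow_mul, mul_comm j k, mul_comm m k]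
    simp only [hz]
    by_cases hmj : m = j
    · subst hmj
      rw [mul_inv_cancel₀ (pow_ne_zero _ hζ0)]
      simp
    · have hne : ζ ^ j * (ζ ^ m)⁻¹ ≠ 1 := by
        intro h
        exact hmj (hprim.pow_inj hj hm
          ((mul_inv_eq_one₀ (pow_ne_zero m hζ0)).mp h)).symm
      rw [geom_sum_eq hne]
      have hzn : (ζ ^ j * (ζ ^ m)⁻¹) ^ n = 1 := by
        have ha : (ζ ^ j) ^ n = 1 := by
          rw [← pow_mul, mul_comm, pow_mul, hζn, one_pow]
        have hb : (ζ ^ m) ^ n = 1 := by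
          rw [← pow_mul, mul_comm, pow_mul, hζn, one_pow]
        rw [mul_pow, inv_pow, ha, hb, inv_one, mul_one]
      rw [hzn]
      simp [hmj]
  -- inverse DFT: the main sum equals g j
  have final : ∑ k ∈ Finset.Ico 1 n, ghat k * ζ ^ (k * j) = g j := by
    have hsum : ∑ k ∈ Finset.range n, ghat k * ζ ^ (k * j)
        = ∑ k ∈ Finset.Ico 1 n, ghat k * ζ ^ (k * j) := by
      rw [Finset.range_eq_Ico, Finset.sum_eq_sum_Ico_succ_bot (by omega : 0 < n)]
      simp [h0]
    rw [← hsum]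
    calc ∑ k ∈ Finset.range n, ghat k * ζ ^ (k * j)
        = ∑ k ∈ Finset.range n, ∑ m ∈ Finset.range n,
            (1 / (n : ℂ)) * g m * (ζ ^ (k * j) * (ζ ^ (k * m))⁻¹) := by
          apply Finset.sum_congr rfl
          intro k _
          rw [hghat k]
          simp only [hEneg, Finset.mul_sum, Finset.sum_mul]
          exact Finset.sum_congr rfl fun m _ => by ring
      _ = ∑ m ∈ Finset.range n, (1 / (n : ℂ)) * g m *
            ∑ k ∈ Finset.range n, ζ ^ (k * j) * (ζ ^ (k * m))⁻¹ := by
          rw [Finset.sum_comm]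
          exact Finset.sum_congr rfl fun m _ => by rw [Finset.mul_sum]
      _ = ∑ m ∈ Finset.range n, (1 / (n : ℂ)) * g m * (if m = j then (n : ℂ) else 0) := by
          exact Finset.sum_congr rfl fun m hm => by rw [horth m (Finset.mem_range.mp hm)]
      _ = ∑ m ∈ Finset.range n, (if m = j then g m else 0) := by
          apply Finset.sum_congr rfl
          intro m _
          split
          · field_simp
          · simp
      _ = g j := by
          rw [Finset.sum_ite_eq' (Finset.range n) j g]
          simp [Finset.mem_range.mpr hj]
  -- assemble
  rw [hφ, hφ, hφ]
  simp only [hE]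
  rw [Finset.mul_sum, ← Finset.sum_sub_distrib, ← Finset.sum_add_distrib, Finset.sum_div]
  exact (Finset.sum_congr rfl hterm).trans final
end
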